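/- If C is a linear code over R = F_p[u,v]/⟨u^k, v², uv−vu⟩ of length n, cardinality p^m, and minimum Lee weight d, then its image φ_L(C) under the Gray map is a p-ary linear code of length 2kn, dimension m, and minimum Hamming distance d. -/

import Mathlib

set_option synthInstance.maxHeartbeats 1000000

open Polynomial

/-- The ring `F_p[u,v]/⟨u^k, v²⟩` (the variables commute, so `uv - vu = 0` is automatic). -/
abbrev Rbase (p k : ℕ) : Type :=
  MvPolynomial (Fin 2) (ZMod p) ⧸
    Ideal.span {(MvPolynomial.X 0 : MvPolynomial (Fin 2) (ZMod p)) ^ k, MvPolynomial.X 1 ^ 2}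

/-- The Hamming weight of a Gray image: the number of nonzero entries of
`(i,j) ↦ φL (c i) j ∈ F_p^{2kn}`. -/
noncomputable def grayWt (p k n : ℕ) (φL : Rbase p k →ₗ[ZMod p] (Fin (2 * k) → ZMod p))
    (c : Fin n → Rbase p k) : ℕ :=
  ∑ i : Fin n, (Finset.univ.filter fun j : Fin (2 * k) => φL (c i) j ≠ 0).card

/-! Applied coordinatewise, the injective `F_p`-linear Gray map is an `F_p`-linear isomorphism
from `C` onto its image. So the image has `p ^ m` words, i.e. dimension `m`, and its nonzero words
are exactly the images of the nonzero codewords, with Hamming weight equal to their Lee weight. -/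

theorem Module.finrank_eq_of_natCard_eq_pow {K V : Type*} [Field K] [Finite K] [AddCommGroup V]
    [Module K V] [Module.Finite K V] {m : ℕ} (h : Nat.card V = Nat.card K ^ m) :
    Module.finrank K V = m :=
  Nat.pow_right_injective Finite.one_lt_card <|
    (Module.natCard_eq_pow_finrank (K := K)).symm.trans h

theorem Submodule.natCard_map_of_injective {R M N : Type*} [Semiring R] [AddCommMonoid M]
    [AddCommMonoid N] [Module R M] [Module R N] {f : M →ₗ[R] N} (hf : Function.Injective f)
    (C : Submodule R M) : Nat.card (C.map f) = Nat.card C :=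
  Nat.card_congr (Submodule.equivMapOfInjective f hf C).toEquiv.symm

theorem Submodule.setOf_exists_mem_map_ne_zero {R M N α : Type*} [Semiring R] [AddCommMonoid M]
    [AddCommMonoid N] [Module R M] [Module R N] {f : M →ₗ[R] N} (hf : Function.Injective f)
    (C : Submodule R M) (g : N → α) :
    {w | ∃ y ∈ C.map f, y ≠ 0 ∧ w = g y} = {w | ∃ c ∈ C, c ≠ 0 ∧ w = g (f c)} := by
  ext w
  constructor
  · rintro ⟨_, ⟨c, hc, rfl⟩, hy0, rfl⟩
    exact ⟨c, hc, fun hc0 => hy0 (by rw [hc0, map_zero]), rfl⟩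
  · rintro ⟨c, hc, hc0, rfl⟩
    exact ⟨f c, Submodule.mem_map_of_mem hc, (map_ne_zero_iff f hf).mpr hc0, rfl⟩

theorem stmt17 (p k n m d : ℕ) [Fact p.Prime]
    (φL : Rbase p k →ₗ[ZMod p] (Fin (2 * k) → ZMod p))
    (hφ : Function.Injective φL)
    (C : Submodule (Rbase p k) (Fin n → Rbase p k))
    (hcard : Nat.card C = p ^ m)
    (hd : IsLeast {w | ∃ c ∈ C, c ≠ 0 ∧ w = grayWt p k n φL c} d) :
    ∃ D : Submodule (ZMod p) (Fin n → Fin (2 * k) → ZMod p),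
      (D : Set (Fin n → Fin (2 * k) → ZMod p))
        = (fun c : Fin n → Rbase p k => fun i j => φL (c i) j) '' (C : Set _) ∧
      Module.finrank (ZMod p) D = m ∧
      IsLeast {w | ∃ y ∈ D, y ≠ 0 ∧
        w = ∑ i : Fin n, (Finset.univ.filter fun j : Fin (2 * k) => y i j ≠ 0).card} d := by
  let Φ := LinearMap.piMap fun _ : Fin n => φL
  have hΦ : Function.Injective Φ := Function.Injective.piMap fun _ => hφ
  refine ⟨(C.restrictScalars (ZMod p)).map Φ, rfl, ?_, ?_⟩
  · apply Module.finrank_eq_of_natCard_eq_pow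
    rw [Submodule.natCard_map_of_injective hΦ, Nat.card_zmod]
    exact hcard
  · rw [Submodule.setOf_exists_mem_map_ne_zero hΦ]
    exact hd
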